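/- arXiv:2601.18605 — 2 statements merged into one kernel-verified Lean document; each statement's English description precedes it below -/
import Mathlib

section
/- Let X be a compact Hausdorff topological space, let W₁, W₂ ⊆ X be nonempty disjoint compact subsets, and let F : X → X be a continuous map such that F(W₁) ⊇ W₁ ∪ W₂ and F(W₂) ⊇ W₁ ∪ W₂. Then the set Λ = {x ∈ X : F^n(x) ∈ W₁ ∪ W₂ for all n ≥ 0} is uncountable; more precisely, for every sequence s ∈ {1,2}^ℕ there exists x ∈ Λ with F^n(x) ∈ W_{s(n)} for all n ≥ 0. -/
/-!
Any finite word over the two symbols is realized by some orbit, by pulling a point back one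
step at a time through the covering relations `W j ⊆ F '' W i`. The points realizing the first
`n` symbols of a sequence form a decreasing sequence of nonempty closed subsets of a compact
set, so their intersection realizes the whole sequence. Disjointness makes the resulting map
from `{1,2}^ℕ` to the non-escaping set injective, hence that set is uncountable.
-/

open Cardinal in
lemma uncountable_nat_arrow {ι : Type*} [Nontrivial ι] : Uncountable (ℕ → ι) := by
  rw [← aleph0_lt_mk_iff, mk_arrow, mk_nat, lift_aleph0, lift_uzero]
  calc ℵ₀ < 2 ^ ℵ₀ := cantor ℵ₀
    _ ≤ #ι ^ ℵ₀ :=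
      power_le_power_right (two_le_iff_one_lt.mpr (one_lt_iff_nontrivial.mpr ‹_›))

open Function

section Itinerary

variable {X ι : Type*} {F : X → X} {W : ι → Set X}

lemma exists_forall_le_iterate_mem (hne : ∀ i, (W i).Nonempty) (hcov : ∀ i j, W j ⊆ F '' W i)
    (s : ℕ → ι) (n : ℕ) : ∃ x, ∀ k ≤ n, F^[k] x ∈ W (s k) := by
  induction n generalizing s with
  | zero =>
    obtain ⟨x, hx⟩ := hne (s 0)
    exact ⟨x, fun k hk => by rwa [Nat.le_zero.mp hk]⟩
  | succ n ih =>
    obtain ⟨y, hy⟩ := ih (fun k => s (k + 1))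
    obtain ⟨x, hx, rfl⟩ := hcov (s 0) (s 1) (hy 0 n.zero_le)
    refine ⟨x, fun k hk => ?_⟩
    cases k with
    | zero => exact hx
    | succ k => exact hy k (by omega)

lemma exists_forall_iterate_mem_of_forall_le [TopologicalSpace X] [T2Space X]
    (hF : Continuous F) (hc : ∀ i, IsCompact (W i)) (s : ℕ → ι)
    (h : ∀ n, ∃ x, ∀ k ≤ n, F^[k] x ∈ W (s k)) : ∃ x, ∀ n, F^[n] x ∈ W (s n) := by
  set K : ℕ → Set X := fun n => ⋂ k ∈ Set.Iic n, F^[k] ⁻¹' W (s k)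
  have hK_closed (n : ℕ) : IsClosed (K n) :=
    isClosed_biInter fun k _ => (hc (s k)).isClosed.preimage (hF.iterate k)
  have hK_anti (n : ℕ) : K (n + 1) ⊆ K n :=
    Set.biInter_subset_biInter_left (Set.Iic_subset_Iic.mpr n.le_succ)
  have hK_ne (n : ℕ) : (K n).Nonempty := by
    obtain ⟨x, hx⟩ := h n
    exact ⟨x, Set.mem_iInter₂.mpr hx⟩
  have hK_zero : IsCompact (K 0) :=
    (hc (s 0)).of_isClosed_subset (hK_closed 0) (Set.biInter_subset_of_mem Set.self_mem_Iic)
  obtain ⟨x, hx⟩ := IsCompact.nonempty_iInter_of_sequence_nonempty_isCompact_isClosed K hK_anti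
    hK_ne hK_zero hK_closed
  exact ⟨x, fun n => Set.mem_iInter₂.mp (Set.mem_iInter.mp hx n) n Set.self_mem_Iic⟩

theorem exists_forall_iterate_mem [TopologicalSpace X] [T2Space X] (hF : Continuous F)
    (hc : ∀ i, IsCompact (W i)) (hne : ∀ i, (W i).Nonempty) (hcov : ∀ i j, W j ⊆ F '' W i)
    (s : ℕ → ι) : ∃ x, ∀ n, F^[n] x ∈ W (s n) :=
  exists_forall_iterate_mem_of_forall_le hF hc s (exists_forall_le_iterate_mem hne hcov s)

lemma eq_of_forall_iterate_mem (hW : Pairwise (Disjoint on W)) {s t : ℕ → ι} {x : X}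
    (hs : ∀ n, F^[n] x ∈ W (s n)) (ht : ∀ n, F^[n] x ∈ W (t n)) : s = t :=
  funext fun n => hW.eq (Set.not_disjoint_iff.mpr ⟨_, hs n, ht n⟩)

theorem not_countable_setOf_forall_iterate_mem_iUnion [TopologicalSpace X] [T2Space X]
    [Uncountable (ℕ → ι)] (hF : Continuous F) (hc : ∀ i, IsCompact (W i))
    (hne : ∀ i, (W i).Nonempty) (hcov : ∀ i j, W j ⊆ F '' W i)
    (hW : Pairwise (Disjoint on W)) :
    ¬ {x | ∀ n, F^[n] x ∈ ⋃ i, W i}.Countable := by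
  choose orbit horbit using exists_forall_iterate_mem hF hc hne hcov
  have horbit_maps : Set.MapsTo orbit Set.univ {x | ∀ n, F^[n] x ∈ ⋃ i, W i} :=
    fun s _ n => Set.mem_iUnion_of_mem _ (horbit s n)
  have horbit_inj : Injective orbit :=
    fun s t hst => eq_of_forall_iterate_mem hW (horbit s) (hst ▸ horbit t)
  exact fun hcount =>
    Set.not_countable_univ (horbit_maps.countable_of_injOn horbit_inj.injOn hcount)

end Itinerary

theorem horseshoe_uncountable_general {X : Type*} [TopologicalSpace X] [T2Space X]
    (F : X → X) (hF : Continuous F) (W₁ W₂ : Set X)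
    (h1c : IsCompact W₁) (h2c : IsCompact W₂)
    (h1ne : W₁.Nonempty) (h2ne : W₂.Nonempty)
    (hdisj : Disjoint W₁ W₂)
    (hcov1 : W₁ ∪ W₂ ⊆ F '' W₁) (hcov2 : W₁ ∪ W₂ ⊆ F '' W₂) :
    (∀ s : ℕ → Bool, ∃ x : X, ∀ n : ℕ, F^[n] x ∈ (if s n then W₁ else W₂)) ∧
    ¬ ({x : X | ∀ n : ℕ, F^[n] x ∈ W₁ ∪ W₂}).Countable := by
  set W : Bool → Set X := fun b => if b then W₁ else W₂
  have hc : ∀ b, IsCompact (W b) := Bool.forall_bool.mpr ⟨h2c, h1c⟩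
  have hne : ∀ b, (W b).Nonempty := Bool.forall_bool.mpr ⟨h2ne, h1ne⟩
  have hcov : ∀ i j, W j ⊆ F '' W i := by
    simp only [Bool.forall_bool, W]
    exact ⟨⟨Set.subset_union_right.trans hcov2, Set.subset_union_left.trans hcov2⟩,
      Set.subset_union_right.trans hcov1, Set.subset_union_left.trans hcov1⟩
  have hW : Pairwise (Disjoint on W) := by
    simp only [Pairwise, Bool.forall_bool, W]
    exact ⟨⟨absurd rfl, fun _ => hdisj.symm⟩, fun _ => hdisj, absurd rfl⟩
  have hunion : ⋃ b, W b = W₁ ∪ W₂ := by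
    ext x
    simp [W, Bool.exists_bool, or_comm]
  refine ⟨exists_forall_iterate_mem hF hc hne hcov, ?_⟩
  rw [← hunion]
  have : Uncountable (ℕ → Bool) := uncountable_nat_arrow
  exact not_countable_setOf_forall_iterate_mem_iUnion hF hc hne hcov hW

/-- Abstract horseshoe: if `F(W₁) ⊇ W₁ ∪ W₂` and `F(W₂) ⊇ W₁ ∪ W₂` for nonempty disjoint
compact sets in a compact Hausdorff space, then every symbol sequence is realized by an
orbit, and the non-escaping set is uncountable. -/
theorem horseshoe_uncountable {X : Type*} [TopologicalSpace X] [CompactSpace X] [T2Space X]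
    (F : X → X) (hF : Continuous F) (W₁ W₂ : Set X)
    (h1c : IsCompact W₁) (h2c : IsCompact W₂)
    (h1ne : W₁.Nonempty) (h2ne : W₂.Nonempty)
    (hdisj : Disjoint W₁ W₂)
    (hcov1 : W₁ ∪ W₂ ⊆ F '' W₁) (hcov2 : W₁ ∪ W₂ ⊆ F '' W₂) :
    (∀ s : ℕ → Bool, ∃ x : X, ∀ n : ℕ, F^[n] x ∈ (if s n then W₁ else W₂)) ∧
    ¬ ({x : X | ∀ n : ℕ, F^[n] x ∈ W₁ ∪ W₂}).Countable :=
  horseshoe_uncountable_general F hF W₁ W₂ h1c h2c h1ne h2ne hdisj hcov1 hcov2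
end

section
/- Let A and B be nonempty finite subsets of the unit circle S¹ ⊆ ℝ². Suppose A and B are unlinked: there exist two disjoint closed arcs I_A and I_B of S¹ with A ⊆ I_A and B ⊆ I_B. Then the convex hulls of A and of B (taken in ℝ²) are disjoint. -/
/-!
Pick a point `a` of `A`; it lies off the arc `I_B`, so after identifying the plane with `ℂ` and
rotating `a` to `-1`, the principal argument is continuous on `I_B` and maps it onto an interval.
Hence the whole arc of the circle between the points of `B` of least and greatest argument lies in
`I_B`, and so contains no point of `A`. The chord joining these two points of `B` strictly separates
the rest of the circle from that arc, so a half-plane bounded by the chord's line contains `B`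
while the open complementary half-plane contains `A`; both are convex.
-/

open Complex Metric Real Set

namespace Real

lemma cos_lt_cos_of_lt_of_lt_two_pi_sub {δ s : ℝ} (hδ : 0 ≤ δ) (h₁ : δ < s) (h₂ : s < 2 * π - δ) :
    cos s < cos δ := by
  rcases le_or_gt s π with hs | hs
  · exact cos_lt_cos_of_nonneg_of_le_pi hδ hs h₁
  · rw [← cos_two_pi_sub s]
    exact cos_lt_cos_of_nonneg_of_le_pi hδ (by linarith) (by linarith)

lemma cos_le_cos_sub_midpoint {m M t : ℝ} (hmM : M - m ≤ 2 * π) (ht : t ∈ Icc m M) :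
    cos ((M - m) / 2) ≤ cos (t - (m + M) / 2) := by
  rw [← cos_abs (t - _)]
  exact cos_le_cos_of_nonneg_of_le_pi (abs_nonneg _) (by linarith)
    (abs_le.2 ⟨by linarith [ht.1], by linarith [ht.2]⟩)

lemma cos_sub_midpoint_lt {m M t : ℝ} (hm : -π < m) (hmM : m ≤ M) (hM : M < π)
    (ht : t ∈ Icc (-π) π \ Icc m M) : cos (t - (m + M) / 2) < cos ((M - m) / 2) := by
  obtain ⟨⟨ht₁, ht₂⟩, htI⟩ := ht
  have hout : t < m ∨ M < t := by
    by_contra! h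
    exact htI h
  rcases hout with h | h
  · rw [← cos_neg]
    exact cos_lt_cos_of_lt_of_lt_two_pi_sub (by linarith) (by linarith) (by linarith)
  · exact cos_lt_cos_of_lt_of_lt_two_pi_sub (by linarith) (by linarith) (by linarith)

end Real

lemma disjoint_convexHull_of_lt_of_le {𝕜 E : Type*} [Field 𝕜] [LinearOrder 𝕜]
    [IsStrictOrderedRing 𝕜] [AddCommGroup E] [Module 𝕜 E] (f : E →ₗ[𝕜] 𝕜) {A B : Set E} {c : 𝕜}
    (hA : ∀ a ∈ A, f a < c) (hB : ∀ b ∈ B, c ≤ f b) :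
    Disjoint (convexHull 𝕜 A) (convexHull 𝕜 B) := by
  refine Disjoint.mono (convexHull_min hA (convex_halfSpace_lt f.isLinear c))
    (convexHull_min hB (convex_halfSpace_ge f.isLinear c)) ?_
  exact disjoint_left.2 fun x hx hx' => (not_le.2 hx) hx'

namespace Complex

lemma re_mul_exp_neg_mul_I {x : ℂ} (hx : ‖x‖ = 1) (μ : ℝ) :
    (x * exp (-μ * I)).re = Real.cos (arg x - μ) := by
  conv_lhs => rw [← norm_mul_exp_arg_mul_I x, hx, ofReal_one, one_mul, ← exp_add]
  rw [← exp_ofReal_mul_I_re]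
  push_cast
  ring_nf

theorem exists_re_mul_separation_of_neg_one_notMem {J B : Set ℂ} (hJ : J ⊆ sphere 0 1)
    (hJpc : IsPreconnected J) (hJ₁ : (-1 : ℂ) ∉ J) (hB : IsCompact B) (hBne : B.Nonempty)
    (hBJ : B ⊆ J) :
    ∃ (w : ℂ) (c : ℝ), (∀ b ∈ B, c ≤ (b * w).re) ∧ ∀ x ∈ sphere (0 : ℂ) 1 \ J, (x * w).re < c := by
  have hnorm {x : ℂ} (hx : x ∈ sphere (0 : ℂ) 1) : ‖x‖ = 1 := mem_sphere_zero_iff_norm.1 hx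
  have hslit : J ⊆ slitPlane := (subset_slitPlane_iff_of_subset_sphere hJ).2 (by simpa using hJ₁)
  have hcont : ContinuousOn arg J := fun x hx => (continuousAt_arg (hslit hx)).continuousWithinAt
  obtain ⟨b₁, hb₁, hmin⟩ := hB.exists_isMinOn hBne (hcont.mono hBJ)
  obtain ⟨b₂, hb₂, hmax⟩ := hB.exists_isMaxOn hBne (hcont.mono hBJ)
  have hM : arg b₂ < π := (arg_le_pi _).lt_of_ne (mem_slitPlane_iff_arg.1 (hslit (hBJ hb₂))).1
  have harc : Icc (arg b₁) (arg b₂) ⊆ arg '' J :=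
    (hJpc.image _ hcont).ordConnected.out (mem_image_of_mem _ (hBJ hb₁))
      (mem_image_of_mem _ (hBJ hb₂))
  refine ⟨exp (-((arg b₁ + arg b₂) / 2 : ℝ) * I), Real.cos ((arg b₂ - arg b₁) / 2),
    fun b hb => ?_, fun x ⟨hx, hxJ⟩ => ?_⟩
  · rw [re_mul_exp_neg_mul_I (hnorm (hJ (hBJ hb)))]
    exact Real.cos_le_cos_sub_midpoint (by linarith [neg_pi_lt_arg b₁]) ⟨hmin hb, hmax hb⟩
  · have hxarc : arg x ∉ Icc (arg b₁) (arg b₂) := fun h => by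
      obtain ⟨y, hy, hyx⟩ := harc h
      have hyx_norm : ‖y‖ = ‖x‖ := by rw [hnorm hx, hnorm (hJ hy)]
      exact hxJ (ext_norm_arg hyx_norm hyx ▸ hy)
    rw [re_mul_exp_neg_mul_I (hnorm hx)]
    exact Real.cos_sub_midpoint_lt (neg_pi_lt_arg _) (hmin hb₂) hM
      ⟨⟨(neg_pi_lt_arg _).le, arg_le_pi _⟩, hxarc⟩

theorem exists_re_mul_separation {J B : Set ℂ} {a : ℂ} (ha : a ∈ sphere (0 : ℂ) 1) (haJ : a ∉ J)
    (hJ : J ⊆ sphere 0 1) (hJpc : IsPreconnected J) (hB : IsCompact B) (hBne : B.Nonempty)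
    (hBJ : B ⊆ J) :
    ∃ (w : ℂ) (c : ℝ), (∀ b ∈ B, c ≤ (b * w).re) ∧ ∀ x ∈ sphere (0 : ℂ) 1 \ J, (x * w).re < c := by
  have ha₀ : a ≠ 0 := ne_zero_of_mem_unit_sphere ⟨a, ha⟩
  set ρ : ℂ → ℂ := (· * -a⁻¹)
  have hρ_sphere {x : ℂ} : ρ x ∈ sphere (0 : ℂ) 1 ↔ x ∈ sphere (0 : ℂ) 1 := by
    simp [ρ, mem_sphere_zero_iff_norm.1 ha]
  have hρ_inj : ρ.Injective := mul_left_injective₀ (neg_ne_zero.2 (inv_ne_zero ha₀))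
  have hρ_cont : Continuous ρ := by fun_prop
  have hρa : ρ a = -1 := by simp [ρ, ha₀]
  obtain ⟨w, c, hBc, hc⟩ := exists_re_mul_separation_of_neg_one_notMem (J := ρ '' J) (B := ρ '' B)
    (by rintro _ ⟨x, hx, rfl⟩; exact hρ_sphere.2 (hJ hx)) (hJpc.image _ hρ_cont.continuousOn)
    (fun ⟨x, hx, hxa⟩ => haJ (hρ_inj (hxa.trans hρa.symm) ▸ hx))
    (hB.image hρ_cont) (hBne.image _) (image_mono hBJ)
  refine ⟨-a⁻¹ * w, c, fun b hb => ?_, fun x ⟨hx, hxJ⟩ => ?_⟩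
  · simpa [ρ, mul_assoc] using hBc _ (mem_image_of_mem ρ hb)
  · simpa [ρ, mul_assoc] using hc _ ⟨hρ_sphere.2 hx, hρ_inj.mem_set_image.not.2 hxJ⟩

end Complex

theorem unlinked_convex_hulls_disjoint_general
    (A B : Set (EuclideanSpace ℝ (Fin 2)))
    (hBfin : B.Finite)
    (hAne : A.Nonempty) (hBne : B.Nonempty)
    (hA : A ⊆ Metric.sphere (0 : EuclideanSpace ℝ (Fin 2)) 1)
    (hunlinked : ∃ IA IB : Set (EuclideanSpace ℝ (Fin 2)),
      IA ⊆ Metric.sphere (0 : EuclideanSpace ℝ (Fin 2)) 1 ∧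
      IB ⊆ Metric.sphere (0 : EuclideanSpace ℝ (Fin 2)) 1 ∧
      IsClosed IA ∧ IsClosed IB ∧ IsPreconnected IA ∧ IsPreconnected IB ∧
      Disjoint IA IB ∧ A ⊆ IA ∧ B ⊆ IB) :
    Disjoint (convexHull ℝ A) (convexHull ℝ B) := by
  obtain ⟨IA, IB, -, hIB, -, -, -, hIBpc, hdisj, hAIA, hBIB⟩ := hunlinked
  obtain ⟨a, haA⟩ := hAne
  let e : EuclideanSpace ℝ (Fin 2) ≃ₗᵢ[ℝ] ℂ := Complex.orthonormalBasisOneI.repr.symm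
  have he_sphere {x : EuclideanSpace ℝ (Fin 2)} : e x ∈ sphere (0 : ℂ) 1 ↔ x ∈ sphere 0 1 := by
    simp
  have hA_IB {x} (hx : x ∈ A) : e x ∉ e '' IB :=
    e.injective.mem_set_image.not.2 (hdisj.notMem_of_mem_left (hAIA hx))
  obtain ⟨w, c, hBc, hAc⟩ := exists_re_mul_separation (J := e '' IB) (B := e '' B)
    (he_sphere.2 (hA haA)) (hA_IB haA)
    (by rintro _ ⟨x, hx, rfl⟩; exact he_sphere.2 (hIB hx))
    (hIBpc.image _ e.continuous.continuousOn) (hBfin.image e).isCompact (hBne.image e)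
    (image_mono hBIB)
  refine disjoint_convexHull_of_lt_of_le (reLm ∘ₗ LinearMap.mulRight ℝ w ∘ₗ e.toLinearMap)
    (c := c) (fun x hx => hAc (e x) ⟨he_sphere.2 (hA hx), hA_IB hx⟩)
    (fun x hx => hBc (e x) ⟨x, hx, rfl⟩)

/-- Unlinked finite subsets of the unit circle (contained in two disjoint closed arcs)
have disjoint convex hulls. -/
theorem unlinked_convex_hulls_disjoint
    (A B : Set (EuclideanSpace ℝ (Fin 2)))
    (hAfin : A.Finite) (hBfin : B.Finite)
    (hAne : A.Nonempty) (hBne : B.Nonempty)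
    (hA : A ⊆ Metric.sphere (0 : EuclideanSpace ℝ (Fin 2)) 1)
    (hB : B ⊆ Metric.sphere (0 : EuclideanSpace ℝ (Fin 2)) 1)
    (hunlinked : ∃ IA IB : Set (EuclideanSpace ℝ (Fin 2)),
      IA ⊆ Metric.sphere (0 : EuclideanSpace ℝ (Fin 2)) 1 ∧
      IB ⊆ Metric.sphere (0 : EuclideanSpace ℝ (Fin 2)) 1 ∧
      IsClosed IA ∧ IsClosed IB ∧ IsPreconnected IA ∧ IsPreconnected IB ∧
      Disjoint IA IB ∧ A ⊆ IA ∧ B ⊆ IB) :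
    Disjoint (convexHull ℝ A) (convexHull ℝ B) :=
  unlinked_convex_hulls_disjoint_general A B hBfin hAne hBne hA hunlinked
end
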